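/- arXiv:2408.13874 — 3 statements merged into one kernel-verified Lean document; each statement's English description precedes it below -/
import Mathlib

section
/- For all integers m ≥ 1 and n ≥ 0, the following identity holds in ℤ[q]: Σ_{k=0}^{n} (−q)^{n−k} · (Π_{j=0}^{k−1} [jm+2]_q) · h_{n−k}([1]_q, [m+1]_q, [2m+1]_q, …, [km+1]_q) = 1. (The k-th summand is (−q)^{n−k} times the lattice ordered q-Stirling number S^o[m,n,k].) -/
open Finset

/-- Complete homogeneous symmetric polynomial evaluated at a list of ring elements. -/
def hpoly {R : Type*} [CommSemiring R] : ℕ → List R → R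
  | 0, _ => 1
  | _ + 1, [] => 0
  | j + 1, a :: l => hpoly (j + 1) l + a * hpoly j (a :: l)
  termination_by j l => (j, l.length)

/-- The q-integer `[l]_q = 1 + q + … + q^{l-1}` in `ℤ[q]`. -/
noncomputable def qint (l : ℕ) : Polynomial ℤ := ∑ i ∈ range l, Polynomial.X ^ i

/-!
Write `s = -q`, `a_j = [jm+1]_q`, so that `[jm+2]_q = 1 - s a_j`. With
`G k = (∏_{j<k} (1 - s a_j)) · Σ_{i ≤ n-k} s^i h_i(a_0, …, a_{k-1})`,
the recursion `h_{i+1}(l, a) = h_{i+1}(l) + a h_i(l, a)` makes the `k`-th summand equal to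
`G k - G (k+1)`, so the sum telescopes to `G 0 - G (n+1) = 1 - 0`.
-/

lemma hpoly_nil {R : Type*} [CommSemiring R] (j : ℕ) :
    hpoly j ([] : List R) = if j = 0 then 1 else 0 := by
  cases j <;> simp [hpoly]

theorem hpoly_succ_append_singleton {R : Type*} [CommSemiring R] :
    ∀ (j : ℕ) (l : List R) (a : R),
      hpoly (j + 1) (l ++ [a]) = hpoly (j + 1) l + a * hpoly j (l ++ [a])
  | j, [], a => by simp [hpoly]
  | 0, b :: l, a => by
      simp only [List.cons_append, hpoly]
      rw [hpoly_succ_append_singleton 0 l a]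
      simp only [hpoly]
      ring
  | j + 1, b :: l, a => by
      have ih := hpoly_succ_append_singleton j (b :: l) a
      simp only [List.cons_append, hpoly] at ih ⊢
      rw [hpoly_succ_append_singleton (j + 1) l a]
      conv_lhs => rw [ih]
      ring
  termination_by j l => (j, l.length)

lemma sum_pow_mul_hpoly_eq_append {R : Type*} [CommRing R] (s a : R) (l : List R) (c : ℕ) :
    ∑ i ∈ range (c + 1), s ^ i * hpoly i l
      = s ^ c * hpoly c (l ++ [a])
        + (1 - s * a) * ∑ i ∈ range c, s ^ i * hpoly i (l ++ [a]) := by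
  induction c with
  | zero => simp [hpoly]
  | succ c ih =>
      rw [sum_range_succ, ih, sum_range_succ (n := c), hpoly_succ_append_singleton c l a]
      ring

theorem sum_pow_mul_prod_mul_hpoly_eq_one {R : Type*} [CommRing R] (s : R) (a : ℕ → R)
    (n : ℕ) :
    ∑ k ∈ range (n + 1),
        s ^ (n - k) * ((∏ j ∈ range k, (1 - s * a j)) *
          hpoly (n - k) ((List.range (k + 1)).map a)) = 1 := by
  set G : ℕ → R := fun k =>
    (∏ j ∈ range k, (1 - s * a j)) *
      ∑ i ∈ range (n + 1 - k), s ^ i * hpoly i ((List.range k).map a) with hG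
  have summand_eq : ∀ k ∈ range (n + 1),
      s ^ (n - k) * ((∏ j ∈ range k, (1 - s * a j)) *
        hpoly (n - k) ((List.range (k + 1)).map a)) = G k - G (k + 1) := by
    intro k hk
    have hk : k ≤ n := Nat.lt_succ_iff.mp (mem_range.mp hk)
    have hlen : n + 1 - k = n - k + 1 := by omega
    have hlen' : n + 1 - (k + 1) = n - k := by omega
    simp only [hG, hlen, hlen', List.range_succ, List.map_append, List.map_singleton,
      prod_range_succ]
    rw [sum_pow_mul_hpoly_eq_append s (a k)]
    ring
  rw [sum_congr rfl summand_eq, sum_range_sub']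
  simp [hG, hpoly_nil]

lemma qint_succ (l : ℕ) : qint (l + 1) = 1 + Polynomial.X * qint l := by
  rw [qint, qint, sum_range_succ', mul_sum]
  simp [pow_succ, mul_comm, add_comm]

theorem stmt7_general (m n : ℕ) :
    ∑ k ∈ range (n + 1),
        (-(Polynomial.X : Polynomial ℤ)) ^ (n - k) *
          ((∏ j ∈ range k, qint (j * m + 2)) *
            hpoly (n - k) ((List.range (k + 1)).map fun j => qint (j * m + 1))) = 1 := by
  have qint_add_two (j : ℕ) :
      qint (j * m + 2) = 1 - -Polynomial.X * qint (j * m + 1) := by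
    rw [qint_succ (j * m + 1)]
    ring
  simp only [qint_add_two]
  exact sum_pow_mul_prod_mul_hpoly_eq_one _ _ n

/-- in `ℤ[q]`,
`Σ_{k=0}^{n} (−q)^{n−k} · (Π_{j=0}^{k−1} [jm+2]_q) · h_{n−k}([1]_q, [m+1]_q, …, [km+1]_q) = 1`,
i.e. the alternating sum of the lattice ordered q-Stirling numbers `S^o[m,n,k]` is `1`. -/
theorem stmt7 (m n : ℕ) (hm : 1 ≤ m) :
    ∑ k ∈ range (n + 1),
        (-(Polynomial.X : Polynomial ℤ)) ^ (n - k) *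
          ((∏ j ∈ range k, qint (j * m + 2)) *
            hpoly (n - k) ((List.range (k + 1)).map fun j => qint (j * m + 1))) = 1 :=
  stmt7_general m n
end

section
/- For all integers m ≥ 2 and n ≥ 0, the following identity holds in the polynomial ring ℤ[q][t]: t^n = Σ_{k=0}^{n} h_{n−k}([1]_q, [m+1]_q, [2m+1]_q, …, [km+1]_q) · Π_{j=0}^{k−1} (t − [jm+1]_q). -/
open Finset

/-!
With `P_k = ∏_{j<k} (t - a_j)` we have `t · P_k = P_{k+1} + a_k P_k`, so multiplying the
expansion of `t^n` by `t` gives `P_k` the coefficient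
`h_{n+1-k}(a_0, …, a_{k-1}) + a_k h_{n-k}(a_0, …, a_k)`, which is `h_{n+1-k}(a_0, …, a_k)`
by the recurrence of `h` in its last variable.
-/

open Polynomial

section
variable {R : Type*} [CommSemiring R]

@[simp]
theorem hpoly_zero (l : List R) : hpoly 0 l = 1 := by
  rw [hpoly]

theorem hpoly_singleton (x : R) (j : ℕ) : hpoly j [x] = x ^ j := by
  induction j with
  | zero => rw [hpoly_zero, pow_zero]
  | succ j ih => rw [hpoly, hpoly, ih, zero_add, pow_succ']

theorem hpoly_append_singleton (x : R) :
    ∀ (j : ℕ) (l : List R), hpoly (j + 1) (l ++ [x]) = hpoly (j + 1) l + x * hpoly j (l ++ [x])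
  | j, [] => by simp [hpoly]
  | 0, b :: l => by
      simp only [List.cons_append, hpoly, hpoly_append_singleton x 0 l]
      ring
  | j + 1, b :: l => by
      have ih := hpoly_append_singleton x j (b :: l)
      rw [List.cons_append] at ih ⊢
      conv_rhs => rw [hpoly.eq_3 (j + 1) b l, hpoly.eq_3 j b (l ++ [x])]
      rw [hpoly.eq_3, hpoly_append_singleton x (j + 1) l, ih]
      ring
  termination_by j l => (j, l.length)

theorem hpoly_map_range_succ (a : ℕ → R) (j k : ℕ) :
    hpoly (j + 1) ((List.range (k + 2)).map a) =
      hpoly (j + 1) ((List.range (k + 1)).map a) +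
        a (k + 1) * hpoly j ((List.range (k + 2)).map a) := by
  rw [List.range_succ (n := k + 1), List.map_append, List.map_singleton, hpoly_append_singleton]

end

section
variable {R : Type*} [CommRing R]

theorem prod_X_sub_C_mul_X (a : ℕ → R) (k : ℕ) :
    (∏ j ∈ range k, (X - C (a j))) * X =
      ∏ j ∈ range (k + 1), (X - C (a j)) + C (a k) * ∏ j ∈ range k, (X - C (a j)) := by
  rw [prod_range_succ]
  ring

theorem X_pow_eq_sum_hpoly_mul_prod_X_sub_C (a : ℕ → R) (n : ℕ) :
    (X : R[X]) ^ n = ∑ k ∈ range (n + 1),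
      C (hpoly (n - k) ((List.range (k + 1)).map a)) * ∏ j ∈ range k, (X - C (a j)) := by
  set H : ℕ → ℕ → R := fun i k => hpoly i ((List.range (k + 1)).map a)
  set Q : ℕ → R[X] := fun k => ∏ j ∈ range k, (X - C (a j))
  change X ^ n = ∑ k ∈ range (n + 1), C (H (n - k) k) * Q k
  have hH0 (i : ℕ) : H i 0 = a 0 ^ i := hpoly_singleton (a 0) i
  induction n with
  | zero => simp [H, Q]
  | succ n ih =>
    have hH (k : ℕ) (hk : k < n) :
        H (n - k) (k + 1) = H (n - k) k + a (k + 1) * H (n - (k + 1)) (k + 1) := by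
      obtain ⟨i, rfl⟩ := Nat.exists_eq_add_of_lt hk
      rw [show k + i + 1 - k = i + 1 by omega, show k + i + 1 - (k + 1) = i by omega]
      exact hpoly_map_range_succ a i k
    calc X ^ (n + 1) = ∑ k ∈ range (n + 1), C (H (n - k) k) * (Q k * X) := by
          rw [pow_succ, ih, sum_mul]; simp only [mul_assoc]
      _ = ∑ k ∈ range n, C (H (n - k) k) * Q (k + 1) + C (H 0 n) * Q (n + 1)
          + (∑ k ∈ range n, C (H (n - (k + 1)) (k + 1)) * (C (a (k + 1)) * Q (k + 1))
            + C (H n 0) * (C (a 0) * Q 0)) := by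
          simp only [prod_X_sub_C_mul_X, Q, mul_add, sum_add_distrib]
          rw [sum_range_succ, sum_range_succ', Nat.sub_self, Nat.sub_zero]
      _ = ∑ k ∈ range (n + 1 + 1), C (H (n + 1 - k) k) * Q k := by
          rw [sum_range_succ', sum_range_succ, Nat.sub_self, Nat.sub_zero]
          have hsum : ∑ k ∈ range n, C (H (n + 1 - (k + 1)) (k + 1)) * Q (k + 1) =
              ∑ k ∈ range n, C (H (n - k) k) * Q (k + 1) +
                ∑ k ∈ range n, C (H (n - (k + 1)) (k + 1)) * (C (a (k + 1)) * Q (k + 1)) := by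
            rw [← sum_add_distrib]
            refine sum_congr rfl fun k hk => ?_
            rw [Nat.add_sub_add_right, hH k (mem_range.1 hk), map_add, map_mul]
            ring
          simp only [hsum, hH0, H, Q, hpoly_zero, map_one, map_pow, prod_range_zero]
          ring

end

theorem stmt11_general (m n : ℕ) :
    (Polynomial.X : Polynomial (Polynomial ℤ)) ^ n =
      ∑ k ∈ range (n + 1),
        Polynomial.C (hpoly (n - k) ((List.range (k + 1)).map fun j => qint (j * m + 1))) *
          ∏ j ∈ range k, (Polynomial.X - Polynomial.C (qint (j * m + 1))) :=
  X_pow_eq_sum_hpoly_mul_prod_X_sub_C (fun j => qint (j * m + 1)) n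

/-- for `m ≥ 2` and `n ≥ 0`, in `ℤ[q][t]` (with `t` the outer variable),
`t^n = Σ_{k=0}^{n} h_{n−k}([1]_q, [m+1]_q, …, [km+1]_q) · Π_{j=0}^{k−1} (t − [jm+1]_q)`. -/
theorem stmt11 (m n : ℕ) (hm : 2 ≤ m) :
    (Polynomial.X : Polynomial (Polynomial ℤ)) ^ n =
      ∑ k ∈ range (n + 1),
        Polynomial.C (hpoly (n - k) ((List.range (k + 1)).map fun j => qint (j * m + 1))) *
          ∏ j ∈ range k, (Polynomial.X - Polynomial.C (qint (j * m + 1))) :=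
  stmt11_general m n
end

section
/- Fix integers m ≥ 1 and n ≥ 1, and let P be the poset of colored set partitions of type (m,n) ordered by refinement, whose minimum element 0̂ is the partition consisting of the block {0} and all singletons {(i,c)}. Let σ ∈ P have km+1 blocks, let its zero block have cardinality b = lm+1, and let b_1,…,b_k be the cardinalities of one block chosen from each of the k orbits of non-zero blocks (all m blocks in an orbit have the same cardinality). Then the Möbius function of P satisfies μ(0̂, σ) = (−1)^{n−k} · (Π_{j=0}^{l−1} (jm+1)) · Π_{j=1}^{k} (b_j − 1)!. -/
open Finset

/-- The colored ground set `X_{m,n} = {0} ⊔ ({1,…,n} × ℤ/mℤ)`, with `none` as basepoint. -/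
abbrev ColoredSet (m n : ℕ) := Option (Fin n × ZMod m)

/-- The action of `c ∈ ℤ/mℤ` on `X_{m,n}`: fixes the basepoint and shifts colors. -/
def shift {m n : ℕ} (c : ZMod m) : ColoredSet m n → ColoredSet m n :=
  Option.map fun p => (p.1, p.2 + c)

/-- A setoid on `X_{m,n}` is a colored set partition of type `(m,n)` if the `ℤ/mℤ`-action
maps blocks to blocks and the induced action on the blocks not containing the basepoint
is free. -/
def IsColored {m n : ℕ} (σ : Setoid (ColoredSet m n)) : Prop :=
  (∀ (c : ZMod m) (x y : ColoredSet m n), σ.r x y → σ.r (shift c x) (shift c y)) ∧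
  (∀ (c : ZMod m) (x : ColoredSet m n), ¬ σ.r x none → σ.r (shift c x) x → c = 0)

/-!
Write `F τ` (`moebiusFormula τ`) for the right-hand side evaluated at a colored partition `τ`.
Since `F 0̂ = 1`, it suffices to show `∑_{τ ≤ σ} F τ = 0` for `σ ≠ 0̂`, by induction on `n`,
grouping the `τ ≤ σ` according to their restriction `τ'` to the first `n` columns. Given `τ'`,
the new column either forms a new free orbit of singletons, which leaves `F` unchanged, or the
point `(n+1, 0)` joins a block `b` of `τ'` lying in the `σ`-block of `(n+1, 0)`, which
multiplies `F` by `-|b|`: a zero block of size `lm+1` contributes the new factor `lm+1`, a free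
block of size `b` turns `(b-1)!` into `b!`. So the fibre over `τ'` contributes `(1 - |W|) F τ'`,
where `W` is the set of points of `X_{m,n}` in the `σ`-block of `(n+1, 0)`. By induction only
`τ' = 0̂` survives the sum over `τ'`, and in that case `|W| = 1` unless `σ = 0̂`.
-/

instance Setoid.finite {α : Type*} [Finite α] : Finite (Setoid α) :=
  Finite.of_injective (fun τ : Setoid α => ⇑τ) fun _ _ => Setoid.eq_iff_rel_eq.2

lemma Set.Finite.finsum_mem_image_eq_mul_ncard {α β : Type*} {f : α → β} {s : Set α}
    (hs : s.Finite) {g : β → ℤ} {c : ℤ}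
    (h : ∀ a ∈ s, g (f a) = c * {a' ∈ s | f a' = f a}.ncard) :
    ∑ᶠ b ∈ f '' s, g b = c * s.ncard := by
  have hfib : s.ncard = ∑ᶠ b ∈ f '' s, {a ∈ s | f a = b}.ncard := by
    rw [← (hs.image f).ncard_biUnion (fun _ _ => hs.subset (Set.sep_subset _ _))]
    · congr 1
      ext a
      simp only [Set.mem_iUnion, Set.mem_image, Set.mem_sep_iff, exists_prop]
      exact ⟨fun ha => ⟨f a, ⟨a, ha, rfl⟩, ha, rfl⟩, fun ⟨_, _, ha, _⟩ => ha⟩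
    · exact fun b _ b' _ hbb' => Set.disjoint_left.2 fun a ha ha' => hbb' (ha.2.symm.trans ha'.2)
  rw [hfib, Nat.cast_finsum_mem (hs.image f), mul_finsum_mem]
  refine finsum_mem_congr rfl ?_
  rintro _ ⟨a, ha, rfl⟩
  exact h a ha

theorem eq_of_moebius_recursion {α : Type*} [PartialOrder α] [Finite α] {μ F : α → ℤ} {a₀ : α}
    (hμ₀ : μ a₀ = 1) (hμ : ∀ x, x ≠ a₀ → μ x = -∑ᶠ y ∈ {y | y < x}, μ y)
    (hF₀ : F a₀ = 1) (hF : ∀ x, x ≠ a₀ → ∑ᶠ y ∈ {y | y ≤ x}, F y = 0) (x : α) : μ x = F x := by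
  induction x using WellFoundedLT.induction with
  | _ x ih =>
    by_cases hx : x = a₀
    · rw [hx, hμ₀, hF₀]
    · have hIic : {y | y ≤ x} = insert x {y | y < x} := by
        ext y
        simp [le_iff_lt_or_eq, or_comm]
      have hsum := hF x hx
      rw [hIic, finsum_mem_insert (s := {y | y < x}) _ (lt_irrefl x) (Set.toFinite _),
        ← finsum_mem_congr (s := {y | y < x}) rfl fun y hy => ih y hy] at hsum
      rw [hμ x hx]
      linarith

namespace ColoredPartition

variable {m n : ℕ}

@[simp] lemma shift_none (c : ZMod m) : shift (n := n) c none = none := rfl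

@[simp] lemma shift_some (c : ZMod m) (i : Fin n) (d : ZMod m) :
    shift c (some (i, d)) = some (i, d + c) := rfl

lemma shift_shift (c d : ZMod m) (x : ColoredSet m n) :
    shift c (shift d x) = shift (d + c) x := by
  cases x <;> simp [shift, add_assoc]

@[simp] lemma shift_zero (x : ColoredSet m n) : shift 0 x = x := by
  cases x <;> simp [shift]

lemma shift_neg_shift (c : ZMod m) (x : ColoredSet m n) : shift (-c) (shift c x) = x := by
  rw [shift_shift, add_neg_cancel, shift_zero]

section

variable {τ : Setoid (ColoredSet m n)}

lemma rel_shift_iff (hτ : IsColored τ) (c : ZMod m) {x y : ColoredSet m n} :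
    τ (shift c x) (shift c y) ↔ τ x y := by
  refine ⟨fun h => ?_, hτ.1 c x y⟩
  simpa only [shift_neg_shift] using hτ.1 (-c) _ _ h

lemma rel_shift_none_iff (hτ : IsColored τ) (c : ZMod m) {x : ColoredSet m n} :
    τ (shift c x) none ↔ τ x none := by
  simpa using rel_shift_iff hτ c (y := none)

lemma eq_of_rel_shift (hτ : IsColored τ) {x : ColoredSet m n} (hx : ¬ τ x none) {c d : ZMod m}
    (h : τ (shift c x) (shift d x)) : c = d := by
  have : τ (shift (c - d) x) x := by
    simpa [shift_shift, sub_eq_add_neg] using hτ.1 (-d) _ _ h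
  exact sub_eq_zero.1 (hτ.2 _ x hx this)

lemma isColored_bot : IsColored (⊥ : Setoid (ColoredSet m n)) := by
  refine ⟨fun c x y (h : x = y) => congrArg (shift c) h, fun c x hx (h : shift c x = x) => ?_⟩
  obtain _ | ⟨i, d⟩ := x
  · exact absurd rfl hx
  · simpa using h

lemma isColored_comap {N : ℕ} {f : ColoredSet m N → ColoredSet m n}
    (hf : ∀ c x, f (shift c x) = shift c (f x)) (hf₀ : f none = none) (hτ : IsColored τ) :
    IsColored (Setoid.comap f τ) := by
  refine ⟨fun c x y h => ?_, fun c x hx h => hτ.2 c (f x) ?_ ?_⟩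
  · simpa only [Setoid.comap_rel, hf] using hτ.1 c _ _ h
  · simpa only [Setoid.comap_rel, hf₀] using hx
  · simpa only [Setoid.comap_rel, hf] using h

/-! ### Free orbits and the zero block -/

def blockOrbit (τ : Setoid (ColoredSet m n)) (x : ColoredSet m n) : Set (ColoredSet m n) :=
  {y | ∃ c : ZMod m, τ (shift c x) y}

def freeOrbits (τ : Setoid (ColoredSet m n)) : Set (Set (ColoredSet m n)) :=
  {S | ∃ x, ¬ τ x none ∧ S = blockOrbit τ x}

noncomputable def numFreeOrbits (τ : Setoid (ColoredSet m n)) : ℕ := (freeOrbits τ).ncard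

def zeroColumns (τ : Setoid (ColoredSet m n)) : Set (Fin n) := {i | τ (some (i, 0)) none}

noncomputable def numZeroColumns (τ : Setoid (ColoredSet m n)) : ℕ := (zeroColumns τ).ncard

lemma mem_blockOrbit_self (x : ColoredSet m n) : x ∈ blockOrbit τ x :=
  ⟨0, by simp⟩

lemma blockOrbit_eq_of_mem (hτ : IsColored τ) {x y : ColoredSet m n} (h : y ∈ blockOrbit τ x) :
    blockOrbit τ y = blockOrbit τ x := by
  obtain ⟨c, hc⟩ := h
  ext z
  constructor
  · rintro ⟨d, hd⟩
    refine ⟨c + d, τ.trans' ?_ hd⟩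
    simpa only [shift_shift] using hτ.1 d _ _ hc
  · rintro ⟨d, hd⟩
    refine ⟨d - c, τ.trans' ?_ hd⟩
    simpa only [shift_shift, add_sub_cancel] using hτ.1 (d - c) _ _ (τ.symm' hc)

lemma shift_mem_blockOrbit (hτ : IsColored τ) {x y : ColoredSet m n} (c : ZMod m)
    (h : y ∈ blockOrbit τ x) : shift c y ∈ blockOrbit τ x := by
  obtain ⟨d, hd⟩ := h
  exact ⟨d + c, by simpa only [shift_shift] using hτ.1 c _ _ hd⟩

lemma not_rel_none_of_mem_blockOrbit (hτ : IsColored τ) {x y : ColoredSet m n}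
    (hx : ¬ τ x none) (h : y ∈ blockOrbit τ x) : ¬ τ y none := by
  obtain ⟨c, hc⟩ := h
  exact fun hy => hx ((rel_shift_none_iff hτ c).1 (τ.trans' hc hy))

lemma eq_blockOrbit_of_mem_freeOrbits (hτ : IsColored τ) {S : Set (ColoredSet m n)}
    (hS : S ∈ freeOrbits τ) {x : ColoredSet m n} (hx : x ∈ S) : S = blockOrbit τ x := by
  obtain ⟨y, -, rfl⟩ := hS
  exact (blockOrbit_eq_of_mem hτ hx).symm

lemma blockOrbit_comp_injective {k : ℕ} {B : Fin k → ColoredSet m n}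
    (hBdist : ∀ i j : Fin k, i ≠ j → ∀ c : ZMod m, ¬ τ (shift c (B i)) (B j)) :
    Function.Injective (fun j => blockOrbit τ (B j)) := fun i j h => by
  by_contra hne
  obtain ⟨c, hc⟩ : B j ∈ blockOrbit τ (B i) := (congrFun h (B j)).mpr (mem_blockOrbit_self _)
  exact hBdist i j hne c hc

/-- The `m` blocks of a free orbit are pairwise distinct, so the orbit is `ℤ/mℤ × [x]`. -/
lemma ncard_blockOrbit (hτ : IsColored τ) {x : ColoredSet m n} (hx : ¬ τ x none) :
    (blockOrbit τ x).ncard = m * Nat.card {y // τ x y} := by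
  let e : ZMod m × {y // τ x y} → blockOrbit τ x :=
    fun p => ⟨shift p.1 p.2.1, p.1, hτ.1 p.1 _ _ p.2.2⟩
  have he : Function.Bijective e := by
    refine ⟨fun ⟨c, y, hy⟩ ⟨d, z, hz⟩ h => ?_, fun ⟨w, c, hc⟩ => ?_⟩
    · have hyz : shift c y = shift d z := congrArg Subtype.val h
      have hcd : c = d := eq_of_rel_shift hτ hx <|
        τ.trans' (hτ.1 c _ _ hy) (hyz ▸ τ.symm' (hτ.1 d _ _ hz))
      subst hcd
      have : y = z := by simpa only [shift_neg_shift] using congrArg (shift (-c)) hyz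
      subst this
      rfl
    · refine ⟨(c, ⟨shift (-c) w, ?_⟩), Subtype.ext (by simp [e, shift_shift])⟩
      simpa only [shift_neg_shift] using hτ.1 (-c) _ _ hc
  rw [← Nat.card_coe_set_eq, ← Nat.card_congr (Equiv.ofBijective e he), Nat.card_prod,
    Nat.card_zmod]

lemma blockOrbit_comap {N : ℕ} {f : ColoredSet m N → ColoredSet m n}
    (hf : ∀ c x, f (shift c x) = shift c (f x)) (x : ColoredSet m N) :
    blockOrbit (Setoid.comap f τ) x = f ⁻¹' blockOrbit τ (f x) := by
  ext y
  simp only [blockOrbit, Setoid.comap_rel, hf, Set.mem_preimage, Set.mem_ofPred_eq]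

lemma freeOrbits_comap {N : ℕ} {f : ColoredSet m N → ColoredSet m n}
    (hf : ∀ c x, f (shift c x) = shift c (f x)) (hf₀ : f none = none)
    (hsurj : Function.Surjective f) :
    freeOrbits (Setoid.comap f τ) = Set.preimage f '' freeOrbits τ := by
  ext S
  simp only [freeOrbits, Setoid.comap_rel, hf₀, blockOrbit_comap hf, Set.mem_image,
    Set.mem_ofPred_eq]
  constructor
  · rintro ⟨x, hx, rfl⟩
    exact ⟨_, ⟨f x, hx, rfl⟩, rfl⟩
  · rintro ⟨_, ⟨y, hy, rfl⟩, rfl⟩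
    obtain ⟨x, rfl⟩ := hsurj y
    exact ⟨x, hy, rfl⟩

lemma zeroBlock_eq (hτ : IsColored τ) :
    {x | τ x none} = insert none (some '' (zeroColumns τ ×ˢ Set.univ)) := by
  ext (_ | ⟨i, c⟩)
  · simp
  · simpa [zeroColumns] using rel_shift_none_iff hτ c (x := some (i, 0))

lemma ncard_zeroBlock [NeZero m] (hτ : IsColored τ) :
    {x | τ x none}.ncard = m * numZeroColumns τ + 1 := by
  rw [zeroBlock_eq hτ, Set.ncard_insert_of_notMem (by simp),
    Set.ncard_image_of_injective _ (Option.some_injective _), Set.ncard_prod, Set.ncard_univ,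
    Nat.card_zmod, numZeroColumns, mul_comm]

lemma card_quotient [NeZero m] (hτ : IsColored τ) :
    Nat.card (Quotient τ) = m * numFreeOrbits τ + 1 := by
  classical
  let rep : freeOrbits τ → ColoredSet m n := fun S => S.2.choose
  have hrep (S : freeOrbits τ) : ¬ τ (rep S) none ∧ S.1 = blockOrbit τ (rep S) :=
    S.2.choose_spec
  let e : ZMod m × freeOrbits τ → {q : Quotient τ // q ≠ ⟦none⟧} := fun p =>
    ⟨⟦shift p.1 (rep p.2)⟧, fun h => (hrep p.2).1 ((rel_shift_none_iff hτ _).1 (Quotient.exact h))⟩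
  have he : Function.Bijective e := by
    refine ⟨fun ⟨c, S⟩ ⟨d, T⟩ h => ?_, fun ⟨q, hq⟩ => ?_⟩
    · have h' : τ (shift c (rep S)) (shift d (rep T)) := Quotient.exact (congrArg Subtype.val h)
      have hST : S = T := by
        refine Subtype.ext ?_
        rw [(hrep S).2, (hrep T).2, ← blockOrbit_eq_of_mem hτ ⟨c, h'⟩,
          blockOrbit_eq_of_mem hτ ⟨d, τ.refl' _⟩]
      subst hST
      rw [eq_of_rel_shift hτ (hrep S).1 h']
    · induction q using Quotient.inductionOn with
      | h x =>
        have hx : ¬ τ x none := fun h => hq (Quotient.sound h)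
        let S : freeOrbits τ := ⟨blockOrbit τ x, x, hx, rfl⟩
        obtain ⟨c, hc⟩ : x ∈ blockOrbit τ (rep S) := (hrep S).2 ▸ mem_blockOrbit_self x
        exact ⟨(c, S), Subtype.ext (Quotient.sound hc)⟩
  rw [← Nat.card_congr (Equiv.optionSubtypeNe (⟦none⟧ : Quotient τ)), Finite.card_option,
    ← Nat.card_congr (Equiv.ofBijective e he), Nat.card_prod, Nat.card_zmod, numFreeOrbits,
    Nat.card_coe_set_eq]

end

/-- The sign `(-1) ^ (n + k)`, with `k` the number of free orbits, stands for the `(-1) ^ (n - k)`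
of the statement without truncated subtraction; the two agree because `k ≤ n`. -/
noncomputable def moebiusFormula (τ : Setoid (ColoredSet m n)) : ℤ :=
  (-1) ^ (n + numFreeOrbits τ) * (∏ j ∈ range (numZeroColumns τ), ((j * m + 1 : ℕ) : ℤ)) *
    ∏ᶠ S ∈ freeOrbits τ, ((S.ncard / m - 1).factorial : ℤ)

lemma numFreeOrbits_bot [NeZero m] : numFreeOrbits (⊥ : Setoid (ColoredSet m n)) = n := by
  have h := card_quotient (isColored_bot (m := m) (n := n))
  rw [Nat.card_congr Setoid.quotientBotEquiv, Finite.card_option, Nat.card_prod, Nat.card_fin,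
    Nat.card_zmod, mul_comm] at h
  exact (Nat.eq_of_mul_eq_mul_left (NeZero.pos m) (by omega)).symm

lemma numZeroColumns_bot : numZeroColumns (⊥ : Setoid (ColoredSet m n)) = 0 := by
  simp [numZeroColumns, zeroColumns]

lemma moebiusFormula_bot [NeZero m] : moebiusFormula (⊥ : Setoid (ColoredSet m n)) = 1 := by
  have horbit : ∀ S ∈ freeOrbits (⊥ : Setoid (ColoredSet m n)),
      ((S.ncard / m - 1).factorial : ℤ) = 1 := by
    rintro _ ⟨x, hx, rfl⟩
    have : Nat.card {y // (⊥ : Setoid (ColoredSet m n)) x y} = 1 :=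
      Nat.card_eq_one_iff_exists.2 ⟨⟨x, rfl⟩, fun y => Subtype.ext y.2.symm⟩
    rw [ncard_blockOrbit isColored_bot hx, this, mul_one, Nat.div_self (NeZero.pos m)]
    rfl
  rw [moebiusFormula, numFreeOrbits_bot, numZeroColumns_bot,
    finprod_mem_eq_one_of_forall_eq_one horbit]
  simp [← two_mul, pow_mul]

/-! ### Adding a column -/

def embed : ColoredSet m n → ColoredSet m (n + 1) := Option.map (Prod.map Fin.castSucc id)

@[simp] lemma embed_none : embed (m := m) (n := n) none = none := rfl

@[simp] lemma embed_some (j : Fin n) (c : ZMod m) :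
    embed (some (j, c)) = some (j.castSucc, c) := rfl

lemma embed_injective : Function.Injective (embed (m := m) (n := n)) :=
  Option.map_injective fun _ _ h =>
    Prod.ext (Fin.castSucc_injective n (congrArg Prod.fst h)) (congrArg Prod.snd h :)

lemma shift_embed (c : ZMod m) (y : ColoredSet m n) : shift c (embed y) = embed (shift c y) := by
  cases y <;> rfl

lemma embed_ne_last (y : ColoredSet m n) (c : ZMod m) : embed y ≠ some (Fin.last n, c) := by
  obtain _ | ⟨j, d⟩ := y
  · simp
  · simp [(Fin.castSucc_lt_last j).ne]

@[elab_as_elim]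
lemma embed_last_cases {motive : ColoredSet m (n + 1) → Prop} (x : ColoredSet m (n + 1))
    (embed : ∀ y, motive (embed y)) (last : ∀ c, motive (some (Fin.last n, c))) : motive x := by
  obtain _ | ⟨i, c⟩ := x
  · exact embed none
  · induction i using Fin.lastCases with
    | last => exact last c
    | cast j => exact embed (some (j, c))

def split : ColoredSet m (n + 1) → ColoredSet m n ⊕ ZMod m
  | none => .inl none
  | some (i, c) => Fin.lastCases (.inr c) (fun j => .inl (some (j, c))) i

@[simp] lemma split_embed (y : ColoredSet m n) : split (embed y) = .inl y := by
  obtain _ | ⟨j, c⟩ := y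
  · rfl
  · simp [split]

@[simp] lemma split_last (c : ZMod m) : split (some (Fin.last n, c)) = .inr c := by
  simp [split]

/-- `liftAt y₀` retracts `X_{m,n+1}` onto `X_{m,n}`, sending the new point `(n+1, c)` to
`c • y₀`. -/
def liftAt (y₀ : ColoredSet m n) (x : ColoredSet m (n + 1)) : ColoredSet m n :=
  (split x).elim id fun c => shift c y₀

@[simp] lemma liftAt_embed (y₀ y : ColoredSet m n) : liftAt y₀ (embed y) = y := by
  simp [liftAt]

@[simp] lemma liftAt_last (y₀ : ColoredSet m n) (c : ZMod m) :
    liftAt y₀ (some (Fin.last n, c)) = shift c y₀ := by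
  simp [liftAt]

lemma liftAt_shift (y₀ : ColoredSet m n) (c : ZMod m) (x : ColoredSet m (n + 1)) :
    liftAt y₀ (shift c x) = shift c (liftAt y₀ x) := by
  induction x using embed_last_cases with
  | embed y => rw [shift_embed, liftAt_embed, liftAt_embed]
  | last d => rw [shift_some, liftAt_last, liftAt_last, shift_shift]

lemma liftAt_surjective (y₀ : ColoredSet m n) : Function.Surjective (liftAt (m := m) y₀) :=
  fun y => ⟨embed y, liftAt_embed y₀ y⟩

lemma preimage_liftAt (y₀ : ColoredSet m n) (S : Set (ColoredSet m n)) :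
    liftAt y₀ ⁻¹' S = embed '' S ∪ (fun c => some (Fin.last n, c)) '' {c | shift c y₀ ∈ S} := by
  ext x
  induction x using embed_last_cases with
  | embed y => simp [embed_injective.eq_iff, (embed_ne_last _ _).symm]
  | last c => simp [embed_ne_last]

open Classical in
lemma ncard_preimage_liftAt [NeZero m] (y₀ : ColoredSet m n) {S : Set (ColoredSet m n)}
    (hS : ∀ c, ∀ y ∈ S, shift c y ∈ S) :
    (liftAt y₀ ⁻¹' S).ncard = S.ncard + if y₀ ∈ S then m else 0 := by
  have hcol : {c : ZMod m | shift c y₀ ∈ S} = if y₀ ∈ S then Set.univ else ∅ := by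
    split_ifs with h
    · exact Set.eq_univ_of_forall fun c => hS c y₀ h
    · exact Set.eq_empty_of_forall_notMem fun c hc =>
        h (by simpa [shift_neg_shift] using hS (-c) _ hc)
  have hdisj : Disjoint (embed '' S) ((fun c => some (Fin.last n, c)) '' {c | shift c y₀ ∈ S}) := by
    simp only [Set.disjoint_left, Set.mem_image]
    rintro _ ⟨y, -, rfl⟩ ⟨c, -, hc⟩
    exact embed_ne_last y c hc.symm
  rw [preimage_liftAt, Set.ncard_union_eq hdisj, Set.ncard_image_of_injective _ embed_injective,
    Set.ncard_image_of_injective _ fun c d h => by simpa using h, hcol]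
  split_ifs <;> simp [Set.ncard_univ]

def extendAt (τ : Setoid (ColoredSet m n)) (y₀ : ColoredSet m n) :
    Setoid (ColoredSet m (n + 1)) :=
  Setoid.comap (liftAt y₀) τ

/-- The new column forms a new free orbit of singleton blocks. -/
def extendNew (τ : Setoid (ColoredSet m n)) : Setoid (ColoredSet m (n + 1)) :=
  Setoid.ker fun x => (split x).map (Quotient.mk τ) id

section

variable {τ : Setoid (ColoredSet m n)}

lemma extendAt_rel {y₀ : ColoredSet m n} {x y : ColoredSet m (n + 1)} :
    extendAt τ y₀ x y ↔ τ (liftAt y₀ x) (liftAt y₀ y) := Iff.rfl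

lemma extendNew_rel {x y : ColoredSet m (n + 1)} :
    extendNew τ x y ↔ (split x).map (Quotient.mk τ) id = (split y).map (Quotient.mk τ) id :=
  Iff.rfl

lemma isColored_extendAt (hτ : IsColored τ) (y₀ : ColoredSet m n) :
    IsColored (extendAt τ y₀) :=
  isColored_comap (liftAt_shift y₀) rfl hτ

@[simp] lemma comap_embed_extendAt (y₀ : ColoredSet m n) :
    Setoid.comap embed (extendAt τ y₀) = τ :=
  Setoid.ext fun a b => by simp [extendAt_rel, Setoid.comap_rel]

@[simp] lemma extendNew_embed_embed {a b : ColoredSet m n} :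
    extendNew τ (embed a) (embed b) ↔ τ a b := by
  simp [extendNew_rel, Quotient.eq]

@[simp] lemma not_extendNew_last_embed {c : ZMod m} {b : ColoredSet m n} :
    ¬ extendNew τ (some (Fin.last n, c)) (embed b) := by
  simp [extendNew_rel]

@[simp] lemma not_extendNew_embed_last {c : ZMod m} {b : ColoredSet m n} :
    ¬ extendNew τ (embed b) (some (Fin.last n, c)) :=
  fun h => not_extendNew_last_embed ((extendNew τ).symm' h)

@[simp] lemma extendNew_last_last {c d : ZMod m} :
    extendNew τ (some (Fin.last n, c)) (some (Fin.last n, d)) ↔ c = d := by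
  simp [extendNew_rel]

@[simp] lemma comap_embed_extendNew : Setoid.comap embed (extendNew τ) = τ :=
  Setoid.ext fun a b => by simp [Setoid.comap_rel]

lemma isColored_extendNew (hτ : IsColored τ) : IsColored (extendNew τ) := by
  refine ⟨fun c x y h => ?_, fun c x hx h => ?_⟩
  · induction x using embed_last_cases with
    | embed a =>
      induction y using embed_last_cases with
      | embed b => simpa [shift_embed, rel_shift_iff hτ] using h
      | last d => exact absurd h not_extendNew_embed_last
    | last c' =>
      induction y using embed_last_cases with
      | embed b => exact absurd h not_extendNew_last_embed
      | last d => simp_all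
  · induction x using embed_last_cases with
    | embed a =>
      rw [shift_embed, extendNew_embed_embed] at h
      exact hτ.2 c a (by simpa [← embed_none] using hx) h
    | last d => simpa using h

def lastColumn : Set (ColoredSet m (n + 1)) := Set.range fun c : ZMod m => some (Fin.last n, c)

lemma ncard_lastColumn : (lastColumn (m := m) (n := n)).ncard = m := by
  rw [lastColumn, ← Nat.card_coe_set_eq,
    Nat.card_range_of_injective (fun c d h => by simpa using h), Nat.card_zmod]

lemma lastColumn_notMem_image_image (𝒞 : Set (Set (ColoredSet m n))) :
    lastColumn ∉ Set.image embed '' 𝒞 := by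
  rintro ⟨T, -, hT⟩
  obtain ⟨y, -, hy⟩ : some (Fin.last n, 0) ∈ embed '' T := hT ▸ ⟨0, rfl⟩
  exact embed_ne_last y 0 hy

lemma blockOrbit_extendNew_embed (y : ColoredSet m n) :
    blockOrbit (extendNew τ) (embed y) = embed '' blockOrbit τ y := by
  ext z
  induction z using embed_last_cases with
  | embed w => simp [blockOrbit, shift_embed, embed_injective.eq_iff]
  | last d => simp [blockOrbit, shift_embed, embed_ne_last]

lemma blockOrbit_extendNew_last (c : ZMod m) :
    blockOrbit (extendNew τ) (some (Fin.last n, c)) = lastColumn := by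
  ext z
  induction z using embed_last_cases with
  | embed w => simpa [blockOrbit, lastColumn] using fun c => (embed_ne_last w c).symm
  | last d => exact ⟨fun _ => ⟨d, rfl⟩, fun _ => ⟨d - c, by simp⟩⟩

lemma freeOrbits_extendNew :
    freeOrbits (extendNew τ) = insert lastColumn (Set.image embed '' freeOrbits τ) := by
  ext S
  constructor
  · rintro ⟨x, hx, rfl⟩
    induction x using embed_last_cases with
    | embed y =>
      rw [← embed_none, extendNew_embed_embed] at hx
      exact Or.inr ⟨_, ⟨y, hx, rfl⟩, (blockOrbit_extendNew_embed y).symm⟩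
    | last c => exact Or.inl (blockOrbit_extendNew_last c)
  · rintro (rfl | ⟨_, ⟨y, hy, rfl⟩, rfl⟩)
    · refine ⟨some (Fin.last n, 0), ?_, (blockOrbit_extendNew_last 0).symm⟩
      rw [← embed_none]
      exact not_extendNew_last_embed
    · refine ⟨embed y, ?_, (blockOrbit_extendNew_embed y).symm⟩
      rwa [← embed_none, extendNew_embed_embed]

lemma zeroBlock_extendNew : {x | extendNew τ x none} = embed '' {y | τ y none} := by
  ext x
  induction x using embed_last_cases with
  | embed y => simp [← embed_none, embed_injective.eq_iff]
  | last c => simp [← embed_none, embed_ne_last]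

lemma numZeroColumns_eq_of_ncard_zeroBlock [NeZero m] {N : ℕ} {τ' : Setoid (ColoredSet m N)}
    (hτ : IsColored τ) (hτ' : IsColored τ') {d : ℕ}
    (h : {x | τ' x none}.ncard = {y | τ y none}.ncard + m * d) :
    numZeroColumns τ' = numZeroColumns τ + d := by
  rw [ncard_zeroBlock hτ, ncard_zeroBlock hτ'] at h
  exact Nat.eq_of_mul_eq_mul_left (NeZero.pos m) (by linarith)

lemma moebiusFormula_extendNew [NeZero m] (hτ : IsColored τ) :
    moebiusFormula (extendNew τ) = moebiusFormula τ := by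
  have hk : numFreeOrbits (extendNew τ) = numFreeOrbits τ + 1 := by
    rw [numFreeOrbits, freeOrbits_extendNew, Set.ncard_insert_of_notMem
      (lastColumn_notMem_image_image _), Set.ncard_image_of_injective _
      (Set.image_injective.2 embed_injective), numFreeOrbits]
  have hl : numZeroColumns (extendNew τ) = numZeroColumns τ :=
    numZeroColumns_eq_of_ncard_zeroBlock (d := 0) hτ (isColored_extendNew hτ) <| by
      rw [zeroBlock_extendNew, Set.ncard_image_of_injective _ embed_injective, mul_zero, add_zero]
  rw [moebiusFormula, moebiusFormula, hk, hl, freeOrbits_extendNew,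
    finprod_mem_insert _ (lastColumn_notMem_image_image _) (Set.toFinite _),
    finprod_mem_image (Set.image_injective.2 embed_injective).injOn, ncard_lastColumn,
    Nat.div_self (NeZero.pos m)]
  simp only [Set.ncard_image_of_injective _ embed_injective]
  ring

lemma numFreeOrbits_extendAt (y₀ : ColoredSet m n) :
    numFreeOrbits (extendAt τ y₀) = numFreeOrbits τ := by
  rw [numFreeOrbits, extendAt, freeOrbits_comap (liftAt_shift y₀) rfl (liftAt_surjective y₀),
    Set.ncard_image_of_injective _ (Set.preimage_injective.2 (liftAt_surjective y₀)),
    numFreeOrbits]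

open Classical in
lemma prod_freeOrbits_extendAt [NeZero m] (hτ : IsColored τ) (y₀ : ColoredSet m n) :
    ∏ᶠ S ∈ freeOrbits (extendAt τ y₀), ((S.ncard / m - 1).factorial : ℤ) =
      ∏ᶠ S ∈ freeOrbits τ, (((S.ncard + if y₀ ∈ S then m else 0) / m - 1).factorial : ℤ) := by
  rw [extendAt, freeOrbits_comap (liftAt_shift y₀) rfl (liftAt_surjective y₀),
    finprod_mem_image (Set.preimage_injective.2 (liftAt_surjective y₀)).injOn]
  refine finprod_mem_congr rfl fun S hS => ?_
  obtain ⟨x, -, rfl⟩ := hS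
  rw [ncard_preimage_liftAt y₀ fun c y => shift_mem_blockOrbit hτ c]

open Classical in
lemma ncard_zeroBlock_extendAt [NeZero m] (hτ : IsColored τ) (y₀ : ColoredSet m n) :
    {x | extendAt τ y₀ x none}.ncard =
      {y | τ y none}.ncard + if τ y₀ none then m else 0 :=
  ncard_preimage_liftAt (S := {y | τ y none}) y₀ fun c y (hy : τ y none) =>
    (rel_shift_none_iff hτ c).2 hy

lemma moebiusFormula_extendAt_of_rel_none [NeZero m] (hτ : IsColored τ) {y₀ : ColoredSet m n}
    (hy₀ : τ y₀ none) :
    moebiusFormula (extendAt τ y₀) = -(Nat.card {y // τ y₀ y} : ℤ) * moebiusFormula τ := by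
  have hl : numZeroColumns (extendAt τ y₀) = numZeroColumns τ + 1 :=
    numZeroColumns_eq_of_ncard_zeroBlock hτ (isColored_extendAt hτ y₀) (by
      rw [ncard_zeroBlock_extendAt hτ, if_pos hy₀, mul_one])
  have hb : Nat.card {y // τ y₀ y} = numZeroColumns τ * m + 1 := by
    have : {y | τ y₀ y} = {y | τ y none} :=
      Set.ext fun y => ⟨fun h => τ.trans' (τ.symm' h) hy₀, fun h => τ.trans' hy₀ (τ.symm' h)⟩
    rw [← Set.coe_ofPred, this, Nat.card_coe_set_eq, ncard_zeroBlock hτ, mul_comm]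
  have hprod : ∀ S ∈ freeOrbits τ, y₀ ∉ S := by
    rintro _ ⟨x, hx, rfl⟩ h
    exact not_rel_none_of_mem_blockOrbit hτ hx h hy₀
  rw [moebiusFormula, moebiusFormula, prod_freeOrbits_extendAt hτ,
    finprod_mem_congr rfl fun S hS => by rw [if_neg (hprod S hS), add_zero],
    numFreeOrbits_extendAt, hl, prod_range_succ, hb]
  push_cast
  ring

lemma moebiusFormula_extendAt_of_not_rel_none [NeZero m] (hτ : IsColored τ)
    {y₀ : ColoredSet m n} (hy₀ : ¬ τ y₀ none) :
    moebiusFormula (extendAt τ y₀) = -(Nat.card {y // τ y₀ y} : ℤ) * moebiusFormula τ := by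
  set O₀ := blockOrbit τ y₀
  set b := Nat.card {y // τ y₀ y}
  have hO₀ : O₀ ∈ freeOrbits τ := ⟨y₀, hy₀, rfl⟩
  have hb : 0 < b := Nat.card_pos_iff.2 ⟨⟨⟨y₀, τ.refl' y₀⟩⟩, inferInstance⟩
  have hl : numZeroColumns (extendAt τ y₀) = numZeroColumns τ :=
    numZeroColumns_eq_of_ncard_zeroBlock (d := 0) hτ (isColored_extendAt hτ y₀) (by
      rw [ncard_zeroBlock_extendAt hτ, if_neg hy₀, mul_zero])
  have hmem : ∀ S ∈ freeOrbits τ \ {O₀}, y₀ ∉ S := fun S hS h =>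
    hS.2 (eq_blockOrbit_of_mem_freeOrbits hτ hS.1 h)
  have hsplit : freeOrbits τ = insert O₀ (freeOrbits τ \ {O₀}) := by
    rw [Set.insert_sdiff_singleton, Set.insert_eq_of_mem hO₀]
  have hfact : ((b * m + m) / m - 1).factorial = b * (b * m / m - 1).factorial := by
    rw [← Nat.succ_mul, Nat.mul_div_cancel _ (NeZero.pos m), Nat.mul_div_cancel _ (NeZero.pos m),
      Nat.succ_sub_one, ← Nat.mul_factorial_pred hb.ne']
  rw [moebiusFormula, moebiusFormula, prod_freeOrbits_extendAt hτ, numFreeOrbits_extendAt, hl,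
    hsplit, finprod_mem_insert _ (by simp) (Set.toFinite _),
    finprod_mem_insert _ (by simp) (Set.toFinite _), if_pos (mem_blockOrbit_self y₀),
    finprod_mem_congr rfl fun S hS => by rw [if_neg (hmem S hS), add_zero],
    ncard_blockOrbit hτ hy₀, mul_comm m b, hfact]
  push_cast
  ring

lemma moebiusFormula_extendAt [NeZero m] (hτ : IsColored τ) (y₀ : ColoredSet m n) :
    moebiusFormula (extendAt τ y₀) = -(Nat.card {y // τ y₀ y} : ℤ) * moebiusFormula τ := by
  by_cases hy₀ : τ y₀ none
  · exact moebiusFormula_extendAt_of_rel_none hτ hy₀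
  · exact moebiusFormula_extendAt_of_not_rel_none hτ hy₀

end

lemma comap_embed_bot :
    Setoid.comap embed (⊥ : Setoid (ColoredSet m (n + 1))) = ⊥ :=
  Setoid.ext fun _ _ => embed_injective.eq_iff

lemma extendNew_bot : extendNew (⊥ : Setoid (ColoredSet m n)) = ⊥ := by
  ext x y
  induction x using embed_last_cases with
  | embed a =>
    induction y using embed_last_cases with
    | embed b => exact extendNew_embed_embed.trans embed_injective.eq_iff.symm
    | last d => simpa using embed_ne_last a d
  | last c =>
    induction y using embed_last_cases with
    | embed b => simpa using (embed_ne_last b c).symm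
    | last d => simp

/-! ### Restriction to the first `n` columns -/

section

variable {σ : Setoid (ColoredSet m (n + 1))} {τ : Setoid (ColoredSet m n)}

def attached (σ : Setoid (ColoredSet m (n + 1))) : Set (ColoredSet m n) :=
  {y | σ (some (Fin.last n, 0)) (embed y)}

lemma isColored_comap_embed (hσ : IsColored σ) : IsColored (Setoid.comap embed σ) :=
  isColored_comap (fun c y => (shift_embed c y).symm) rfl hσ

lemma rel_embed_liftAt (hσ : IsColored σ) {y₀ : ColoredSet m n} (hy₀ : y₀ ∈ attached σ)
    (x : ColoredSet m (n + 1)) : σ x (embed (liftAt y₀ x)) := by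
  induction x using embed_last_cases with
  | embed y => simp
  | last c => simpa [shift_embed] using hσ.1 c _ _ hy₀

lemma eq_extendAt_of_mem_attached (hσ : IsColored σ) {y₀ : ColoredSet m n}
    (hy₀ : y₀ ∈ attached σ) : σ = extendAt (Setoid.comap embed σ) y₀ := by
  have h := rel_embed_liftAt hσ hy₀
  exact Setoid.ext fun x y =>
    ⟨fun hxy => σ.trans' (σ.symm' (h x)) (σ.trans' hxy (h y)),
      fun hxy => σ.trans' (h x) (σ.trans' hxy (σ.symm' (h y)))⟩

lemma extendAt_le (hσ : IsColored σ) (hle : τ ≤ Setoid.comap embed σ) {y₀ : ColoredSet m n}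
    (hy₀ : y₀ ∈ attached σ) : extendAt τ y₀ ≤ σ := by
  have h := rel_embed_liftAt hσ hy₀
  exact fun x y hxy => σ.trans' (h x) (σ.trans' (hle hxy) (σ.symm' (h y)))

lemma not_rel_last_embed_of_attached_eq_empty (hσ : IsColored σ) (h : attached σ = ∅)
    (c : ZMod m) (b : ColoredSet m n) : ¬ σ (some (Fin.last n, c)) (embed b) := by
  intro hcb
  have : shift (-c) b ∈ attached σ := by
    show σ _ _
    simpa [shift_embed] using hσ.1 (-c) _ _ hcb
  simp [h] at this

lemma eq_extendNew_of_attached_eq_empty (hσ : IsColored σ) (h : attached σ = ∅) :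
    σ = extendNew (Setoid.comap embed σ) := by
  have hlast := not_rel_last_embed_of_attached_eq_empty hσ h
  ext x y
  induction x using embed_last_cases with
  | embed a =>
    induction y using embed_last_cases with
    | embed b => simp [Setoid.comap_rel]
    | last d => simpa using fun h' => hlast d a (σ.symm' h')
  | last c =>
    induction y using embed_last_cases with
    | embed b => simpa using hlast c b
    | last d =>
      rw [extendNew_last_last]
      refine ⟨fun hcd => eq_of_rel_shift hσ (x := some (Fin.last n, 0)) (hlast 0 none) ?_,
        fun hcd => hcd ▸ σ.refl' _⟩
      simpa using hcd

lemma extendNew_le (hle : τ ≤ Setoid.comap embed σ) : extendNew τ ≤ σ := by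
  intro x y hxy
  induction x using embed_last_cases with
  | embed a =>
    induction y using embed_last_cases with
    | embed b => exact hle (extendNew_embed_embed.1 hxy)
    | last d => exact absurd hxy not_extendNew_embed_last
  | last c =>
    induction y using embed_last_cases with
    | embed b => exact absurd hxy not_extendNew_last_embed
    | last d => exact extendNew_last_last.1 hxy ▸ σ.refl' _

lemma extendAt_eq_extendAt_iff (hτ : IsColored τ) {y y' : ColoredSet m n} :
    extendAt τ y = extendAt τ y' ↔ τ y y' := by
  constructor
  · intro h
    have : extendAt τ y' (some (Fin.last n, 0)) (embed y) := by
      rw [← h, extendAt_rel, liftAt_last, liftAt_embed, shift_zero]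
    simpa [extendAt_rel] using τ.symm' this
  · intro h
    have hlift (x : ColoredSet m (n + 1)) : τ (liftAt y x) (liftAt y' x) := by
      induction x using embed_last_cases with
      | embed a => simp
      | last c => simpa using hτ.1 c _ _ h
    exact Setoid.ext fun x z =>
      ⟨fun hxz => τ.trans' (τ.symm' (hlift x)) (τ.trans' hxz (hlift z)),
        fun hxz => τ.trans' (hlift x) (τ.trans' hxz (τ.symm' (hlift z)))⟩

lemma extendNew_ne_extendAt (y : ColoredSet m n) : extendNew τ ≠ extendAt τ y := by
  intro h
  have : extendAt τ y (some (Fin.last n, 0)) (embed y) := by simp [extendAt_rel]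
  exact not_extendNew_last_embed (h ▸ this)

lemma setOf_comap_embed_eq (hσ : IsColored σ) (hτ : IsColored τ)
    (hle : τ ≤ Setoid.comap embed σ) :
    {ρ | IsColored ρ ∧ ρ ≤ σ ∧ Setoid.comap embed ρ = τ} =
      insert (extendNew τ) (extendAt τ '' attached σ) := by
  ext ρ
  constructor
  · rintro ⟨hρ, hρσ, rfl⟩
    by_cases h : attached ρ = ∅
    · exact Or.inl (eq_extendNew_of_attached_eq_empty hρ h)
    · obtain ⟨y₀, hy₀⟩ := Set.nonempty_iff_ne_empty.2 h
      exact Or.inr ⟨y₀, hρσ hy₀, (eq_extendAt_of_mem_attached hρ hy₀).symm⟩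
  · rintro (rfl | ⟨y₀, hy₀, rfl⟩)
    · exact ⟨isColored_extendNew hτ, extendNew_le hle, comap_embed_extendNew⟩
    · exact ⟨isColored_extendAt hτ y₀, extendAt_le hσ hle hy₀, comap_embed_extendAt y₀⟩

lemma setOf_le_eq_biUnion_comap_embed (σ : Setoid (ColoredSet m (n + 1))) :
    {ρ | IsColored ρ ∧ ρ ≤ σ} =
      ⋃ τ ∈ {τ | IsColored τ ∧ τ ≤ Setoid.comap embed σ},
        {ρ | IsColored ρ ∧ ρ ≤ σ ∧ Setoid.comap embed ρ = τ} := by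
  ext ρ
  simp only [Set.mem_ofPred_eq, Set.mem_iUnion, exists_prop]
  exact ⟨fun ⟨hρ, hρσ⟩ => ⟨_, ⟨isColored_comap_embed hρ, fun _ _ h => hρσ h⟩, hρ, hρσ, rfl⟩,
    fun ⟨_, _, hρ, hρσ, _⟩ => ⟨hρ, hρσ⟩⟩

lemma sum_moebiusFormula_comap_embed_eq [NeZero m] (hσ : IsColored σ) (hτ : IsColored τ)
    (hle : τ ≤ Setoid.comap embed σ) :
    ∑ᶠ ρ ∈ {ρ | IsColored ρ ∧ ρ ≤ σ ∧ Setoid.comap embed ρ = τ}, moebiusFormula ρ =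
      (1 - (attached σ).ncard) * moebiusFormula τ := by
  have hblock (y : ColoredSet m n) (hy : y ∈ attached σ) :
      {y' ∈ attached σ | extendAt τ y' = extendAt τ y} = {y' | τ y y'} := by
    ext y'
    simp only [extendAt_eq_extendAt_iff hτ, Set.mem_ofPred_eq]
    exact ⟨fun h => τ.symm' h.2, fun h => ⟨σ.trans' hy (hle h), τ.symm' h⟩⟩
  rw [setOf_comap_embed_eq hσ hτ hle, finsum_mem_insert _ ?_ ((Set.toFinite _).image _),
    (Set.toFinite _).finsum_mem_image_eq_mul_ncard (c := -moebiusFormula τ),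
    moebiusFormula_extendNew hτ]
  · ring
  · intro y hy
    have hcard : Nat.card {y' // τ y y'} = {y' | τ y y'}.ncard := Nat.card_coe_set_eq _
    rw [moebiusFormula_extendAt hτ, hblock y hy, hcard]
    ring
  · rintro ⟨y, -, h⟩
    exact extendNew_ne_extendAt y h.symm

open Classical in
lemma ncard_attached_of_comap_embed_eq_bot (hσ : IsColored σ) (h : Setoid.comap embed σ = ⊥) :
    (attached σ).ncard = if σ = ⊥ then 0 else 1 := by
  split_ifs with hbot
  · subst hbot
    have : attached (⊥ : Setoid (ColoredSet m (n + 1))) = ∅ :=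
      Set.eq_empty_of_forall_notMem fun y (hy : _ = _) => embed_ne_last y 0 hy.symm
    rw [this, Set.ncard_empty]
  · obtain ⟨y, hy⟩ := Set.nonempty_iff_ne_empty.2 fun he => hbot <| by
      rw [eq_extendNew_of_attached_eq_empty hσ he, h, extendNew_bot]
    have hsub : (attached σ).Subsingleton := fun y hy y' hy' => by
      have : Setoid.comap embed σ y y' := σ.trans' (σ.symm' hy) hy'
      rwa [h] at this
    rw [hsub.eq_singleton_of_mem hy, Set.ncard_singleton]

end

variable [NeZero m]

open Classical in
theorem sum_moebiusFormula_colored_le (σ : Setoid (ColoredSet m n)) (hσ : IsColored σ) :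
    ∑ᶠ τ ∈ {τ | IsColored τ ∧ τ ≤ σ}, moebiusFormula τ = if σ = ⊥ then 1 else 0 := by
  induction n with
  | zero =>
    have hbot (τ : Setoid (ColoredSet m 0)) : τ = ⊥ :=
      Setoid.ext fun x y => by simp [Subsingleton.elim x y]
    have : {τ : Setoid (ColoredSet m 0) | IsColored τ ∧ τ ≤ σ} = {⊥} :=
      Set.eq_singleton_iff_unique_mem.2
        ⟨⟨isColored_bot, (hbot σ).symm ▸ le_rfl⟩, fun τ _ => hbot τ⟩
    rw [this, finsum_mem_singleton, moebiusFormula_bot, if_pos (hbot σ)]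
  | succ n ih =>
    have hdisj : Set.PairwiseDisjoint {τ' | IsColored τ' ∧ τ' ≤ Setoid.comap embed σ}
        fun τ' => {ρ | IsColored ρ ∧ ρ ≤ σ ∧ Setoid.comap embed ρ = τ'} :=
      fun _ _ _ _ hne => Set.disjoint_left.2 fun _ h h' => hne (h.2.2.symm.trans h'.2.2)
    rw [setOf_le_eq_biUnion_comap_embed,
      finsum_mem_biUnion hdisj (Set.toFinite _) fun _ _ => Set.toFinite _,
      finsum_mem_congr rfl fun τ' hτ' => sum_moebiusFormula_comap_embed_eq hσ hτ'.1 hτ'.2,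
      ← mul_finsum_mem, ih _ (isColored_comap_embed hσ)]
    by_cases hb : Setoid.comap embed σ = ⊥
    · rw [if_pos hb, ncard_attached_of_comap_embed_eq_bot hσ hb]
      split_ifs <;> simp
    · have : σ ≠ ⊥ := fun h => hb (h ▸ comap_embed_bot)
      simp [hb, this]

open Classical in
lemma sum_moebiusFormula_le (x : {σ : Setoid (ColoredSet m n) // IsColored σ}) :
    ∑ᶠ y ∈ {y | y ≤ x}, moebiusFormula y.1 = if x.1 = ⊥ then 1 else 0 := by
  have : {τ | IsColored τ ∧ τ ≤ x.1} = Subtype.val '' {y | y ≤ x} := by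
    ext τ
    exact ⟨fun ⟨hτ, hle⟩ => ⟨⟨τ, hτ⟩, hle, rfl⟩, fun ⟨y, hy, hyτ⟩ => hyτ ▸ ⟨y.2, hy⟩⟩
  rw [← sum_moebiusFormula_colored_le x.1 x.2, this,
    finsum_mem_image Subtype.val_injective.injOn]

variable {σ : Setoid (ColoredSet m n)} {k : ℕ}

lemma numFreeOrbits_eq (hσ : IsColored σ) (hblocks : Nat.card (Quotient σ) = k * m + 1) :
    numFreeOrbits σ = k := by
  rw [card_quotient hσ, mul_comm k] at hblocks
  exact Nat.eq_of_mul_eq_mul_left (NeZero.pos m) (by omega)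

lemma le_of_card_quotient (hblocks : Nat.card (Quotient σ) = k * m + 1) : k ≤ n := by
  have h := Nat.card_le_card_of_surjective _ (Quotient.mk_surjective (s := σ))
  rw [hblocks, Finite.card_option, Nat.card_prod, Nat.card_fin, Nat.card_zmod] at h
  exact Nat.le_of_mul_le_mul_right (by omega) (NeZero.pos m)

lemma range_blockOrbit_eq_freeOrbits (hk : numFreeOrbits σ = k)
    {B : Fin k → ColoredSet m n} (hBnz : ∀ j, ¬ σ (B j) none)
    (hBdist : ∀ i j : Fin k, i ≠ j → ∀ c : ZMod m, ¬ σ (shift c (B i)) (B j)) :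
    Set.range (fun j => blockOrbit σ (B j)) = freeOrbits σ := by
  refine Set.eq_of_subset_of_ncard_le ?_ ?_ (Set.toFinite _)
  · rintro _ ⟨j, rfl⟩
    exact ⟨B j, hBnz j, rfl⟩
  · rw [← numFreeOrbits, hk, ← Nat.card_coe_set_eq,
      Nat.card_range_of_injective (blockOrbit_comp_injective hBdist), Nat.card_fin]

lemma moebiusFormula_eq (hσ : IsColored σ) {l : ℕ} (hblocks : Nat.card (Quotient σ) = k * m + 1)
    (hzero : Nat.card {x // σ x none} = l * m + 1) {B : Fin k → ColoredSet m n}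
    (hBnz : ∀ j, ¬ σ (B j) none)
    (hBdist : ∀ i j : Fin k, i ≠ j → ∀ c : ZMod m, ¬ σ (shift c (B i)) (B j)) :
    moebiusFormula σ = (-1 : ℤ) ^ (n - k) * (∏ j ∈ range l, ((j * m + 1 : ℕ) : ℤ)) *
      ∏ j : Fin k, ((Nat.card {x // σ x (B j)} - 1).factorial : ℤ) := by
  have hk := numFreeOrbits_eq hσ hblocks
  have hl : numZeroColumns σ = l := by
    have hcard : Nat.card {x // σ x none} = {x | σ x none}.ncard := Nat.card_coe_set_eq _
    rw [hcard, ncard_zeroBlock hσ, mul_comm l] at hzero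
    exact Nat.eq_of_mul_eq_mul_left (NeZero.pos m) (by omega)
  have hsign : (-1 : ℤ) ^ (n + k) = (-1) ^ (n - k) := by
    rw [show n + k = n - k + 2 * k by have := le_of_card_quotient hblocks; omega, pow_add,
      pow_mul]
    simp
  have hfactor (j : Fin k) :
      (blockOrbit σ (B j)).ncard / m - 1 = Nat.card {x // σ x (B j)} - 1 := by
    rw [ncard_blockOrbit hσ (hBnz j), Nat.mul_div_cancel_left _ (NeZero.pos m),
      Nat.card_congr (Equiv.subtypeEquivRight fun _ => σ.comm')]
  rw [moebiusFormula, hk, hl, hsign, ← range_blockOrbit_eq_freeOrbits hk hBnz hBdist,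
    finprod_mem_range (blockOrbit_comp_injective hBdist),
    finprod_eq_prod_of_fintype]
  simp only [hfactor]

end ColoredPartition

open ColoredPartition in
theorem stmt17_general (m n : ℕ) (hm : 1 ≤ m)
    (μ : {σ : Setoid (ColoredSet m n) // IsColored σ} → ℤ)
    (hμbot : ∀ x : {σ : Setoid (ColoredSet m n) // IsColored σ}, x.1 = ⊥ → μ x = 1)
    (hμrec : ∀ x : {σ : Setoid (ColoredSet m n) // IsColored σ}, x.1 ≠ ⊥ →
      μ x = -∑ᶠ y ∈ {y : {σ : Setoid (ColoredSet m n) // IsColored σ} | y.1 < x.1}, μ y)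
    (σ : Setoid (ColoredSet m n)) (hσ : IsColored σ) (k l : ℕ)
    (hblocks : Nat.card (Quotient σ) = k * m + 1)
    (hzero : Nat.card {x : ColoredSet m n // σ.r x none} = l * m + 1)
    (B : Fin k → ColoredSet m n)
    (hBnz : ∀ j, ¬ σ.r (B j) none)
    (hBdist : ∀ i j : Fin k, i ≠ j → ∀ c : ZMod m, ¬ σ.r (shift c (B i)) (B j)) :
    μ ⟨σ, hσ⟩ =
      (-1 : ℤ) ^ (n - k) * (∏ j ∈ range l, ((j * m + 1 : ℕ) : ℤ)) *
        ∏ j : Fin k,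
          ((Nat.card {x : ColoredSet m n // σ.r x (B j)} - 1).factorial : ℤ) := by
  have : NeZero m := ⟨by omega⟩
  have hne {x : {σ : Setoid (ColoredSet m n) // IsColored σ}} (hx : x ≠ ⟨⊥, isColored_bot⟩) :
      x.1 ≠ ⊥ := fun h => hx (Subtype.ext h)
  have hμF := eq_of_moebius_recursion (hμbot _ rfl) (fun x hx => hμrec x (hne hx))
    moebiusFormula_bot (fun x hx => by rw [sum_moebiusFormula_le, if_neg (hne hx)]) ⟨σ, hσ⟩
  rw [hμF, moebiusFormula_eq hσ hblocks hzero hBnz hBdist]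

/-- let `P` be the poset of colored set partitions of type `(m,n)`
ordered by refinement, whose minimum element is `⊥` (the partition into the block `{0}`
and singletons), and let `μ` be its Möbius function, i.e. `μ = 1` at the minimum and
`μ x = −Σ_{y<x} μ y` otherwise.  If `σ ∈ P` has `km+1` blocks, its zero block has
cardinality `lm+1`, and `B 1, …, B k` are representatives of one block from each of the
`k` orbits of non-zero blocks (pairwise in distinct orbits), then
`μ(0̂, σ) = (−1)^{n−k} · (Π_{j=0}^{l−1} (jm+1)) · Π_{j=1}^{k} (b_j − 1)!`,
where `b_j` is the cardinality of the block of `B j`. -/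
theorem stmt17 (m n : ℕ) (hm : 1 ≤ m) (hn : 1 ≤ n)
    (μ : {σ : Setoid (ColoredSet m n) // IsColored σ} → ℤ)
    (hμbot : ∀ x : {σ : Setoid (ColoredSet m n) // IsColored σ}, x.1 = ⊥ → μ x = 1)
    (hμrec : ∀ x : {σ : Setoid (ColoredSet m n) // IsColored σ}, x.1 ≠ ⊥ →
      μ x = -∑ᶠ y ∈ {y : {σ : Setoid (ColoredSet m n) // IsColored σ} | y.1 < x.1}, μ y)
    (σ : Setoid (ColoredSet m n)) (hσ : IsColored σ) (k l : ℕ)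
    (hblocks : Nat.card (Quotient σ) = k * m + 1)
    (hzero : Nat.card {x : ColoredSet m n // σ.r x none} = l * m + 1)
    (B : Fin k → ColoredSet m n)
    (hBnz : ∀ j, ¬ σ.r (B j) none)
    (hBdist : ∀ i j : Fin k, i ≠ j → ∀ c : ZMod m, ¬ σ.r (shift c (B i)) (B j)) :
    μ ⟨σ, hσ⟩ =
      (-1 : ℤ) ^ (n - k) * (∏ j ∈ range l, ((j * m + 1 : ℕ) : ℤ)) *
        ∏ j : Fin k,
          ((Nat.card {x : ColoredSet m n // σ.r x (B j)} - 1).factorial : ℤ) :=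
  stmt17_general m n hm μ hμbot hμrec σ hσ k l hblocks hzero B hBnz hBdist
end
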